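/- Let R_1, R_2 > 0, τ_1, τ_2 > 0 with R_1/τ_1 < R_2/τ_2, and ε_1 ≥ 0. If 0 < ε_2 ≤ ε_1 (2^{R_2}-1)/(2^{R_1}-1) + (2^{R_2}-1)/(2^{R_1/τ_1}-1) - (2^{R_2}-1)/(2^{R_2/τ_2}-1), then for any A ≥ 0, c ≥ 0 the allocations a_1 = (2^{R_1}-1)/(2^{R_1/τ_1}-1) + ε_1 + (2^{R_1}-1)(A' + c·2^{R_2} + ε_2) and a_2 = (2^{R_2}-1)/(2^{R_2/τ_2}-1) + ε_2 + (2^{R_2}-1)(A + c) with A' = a_2 + A satisfy a_1 ≥ a_2 · 2^{R_2}(2^{R_1}-1)/(2^{R_2}-1). -/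

import Mathlib

/-! Scaling the bound on `ε₂` by `(2^R₁ - 1)/(2^R₂ - 1)` gives exactly the part of the
well-behaved condition that involves the baselines and the surpluses; what remains is
`(2^R₁ - 1)((2^R₂ - 1) c + ε₂) ≥ 0`, which holds because `c` and `ε₂` are nonnegative. -/

/-- Here `xᵢ` stands for `2 ^ Rᵢ` and `yᵢ` for `2 ^ (Rᵢ / τᵢ)`. -/
theorem well_behaved_of_surplus_le {x₁ x₂ y₁ y₂ ε₁ ε₂ A c a₁ a₂ : ℝ}
    (hx₁ : 1 < x₁) (hx₂ : 1 < x₂) (hε₂ : 0 ≤ ε₂) (hc : 0 ≤ c)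
    (h : ε₂ ≤ ε₁ * (x₂ - 1) / (x₁ - 1) + (x₂ - 1) / (y₁ - 1) - (x₂ - 1) / (y₂ - 1))
    (ha₂ : a₂ = (x₂ - 1) / (y₂ - 1) + ε₂ + (x₂ - 1) * (A + c))
    (ha₁ : a₁ = (x₁ - 1) / (y₁ - 1) + ε₁ + (x₁ - 1) * ((a₂ + A) + c * x₂ + ε₂)) :
    a₂ * x₂ * (x₁ - 1) / (x₂ - 1) ≤ a₁ := by
  have hg₁ : 0 < x₁ - 1 := sub_pos.mpr hx₁
  have hg₂ : 0 < x₂ - 1 := sub_pos.mpr hx₂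
  set r := (x₁ - 1) / (x₂ - 1) with hr
  have hr_pos : 0 < r := div_pos hg₁ hg₂
  have hr_mul : r * (x₂ - 1) = x₁ - 1 := div_mul_cancel₀ _ hg₂.ne'
  have hscaled : r * ε₂ ≤ ε₁ + (x₁ - 1) / (y₁ - 1) - r * ((x₂ - 1) / (y₂ - 1)) := by
    calc r * ε₂
        ≤ r * (ε₁ * (x₂ - 1) / (x₁ - 1) + (x₂ - 1) / (y₁ - 1) - (x₂ - 1) / (y₂ - 1)) :=
          mul_le_mul_of_nonneg_left h hr_pos.le
      _ = ε₁ + (x₁ - 1) / (y₁ - 1) - r * ((x₂ - 1) / (y₂ - 1)) := by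
          rw [hr]; field_simp
  have hlhs : a₂ * x₂ * (x₁ - 1) / (x₂ - 1) = r * a₂ + (x₁ - 1) * a₂ := by
    rw [hr]; field_simp; ring
  have hrest : 0 ≤ (x₁ - 1) * ((x₂ - 1) * c + ε₂) := by positivity
  rw [hlhs, ha₁, ha₂]
  linear_combination hscaled + hrest + (A + c) * hr_mul

theorem stmt_17 (R₁ R₂ τ₁ τ₂ ε₁ ε₂ A c : ℝ)
    (hR₁ : 0 < R₁) (hR₂ : 0 < R₂)
    (hε₂pos : 0 < ε₂)
    (hε₂ : ε₂ ≤ ε₁ * ((2 : ℝ) ^ R₂ - 1) / ((2 : ℝ) ^ R₁ - 1) +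
      ((2 : ℝ) ^ R₂ - 1) / ((2 : ℝ) ^ (R₁ / τ₁) - 1) -
      ((2 : ℝ) ^ R₂ - 1) / ((2 : ℝ) ^ (R₂ / τ₂) - 1))
    (hc : 0 ≤ c)
    (a₁ a₂ : ℝ)
    (ha₂ : a₂ = ((2 : ℝ) ^ R₂ - 1) / ((2 : ℝ) ^ (R₂ / τ₂) - 1) + ε₂ +
      ((2 : ℝ) ^ R₂ - 1) * (A + c))
    (ha₁ : a₁ = ((2 : ℝ) ^ R₁ - 1) / ((2 : ℝ) ^ (R₁ / τ₁) - 1) + ε₁ +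
      ((2 : ℝ) ^ R₁ - 1) * ((a₂ + A) + c * (2 : ℝ) ^ R₂ + ε₂)) :
    a₁ ≥ a₂ * (2 : ℝ) ^ R₂ * ((2 : ℝ) ^ R₁ - 1) / ((2 : ℝ) ^ R₂ - 1) :=
  well_behaved_of_surplus_le (Real.one_lt_rpow one_lt_two hR₁) (Real.one_lt_rpow one_lt_two hR₂)
    hε₂pos.le hc hε₂ ha₂ ha₁
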